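/- Let k ≥ 2, let P ⊆ ℝ³ be a nonempty bounded open set, and let v : ℝ³ → ℝ be continuously differentiable. Then there exists a unique polynomial function p : ℝ³ → ℝ of total degree at most k such that ∫_P ∇(v − p)(x)·∇q(x) dx = 0 for every polynomial function q of total degree at most k, and ∫_P (v(x) − p(x)) dx = 0 (integrals with respect to Lebesgue measure). -/

import Mathlib

/-!
The conditions say that `p` solves a Galerkin problem on the finite-dimensional space of
polynomials of degree `≤ k`: `a(p, q) = a(v, q)` for the Dirichlet form `a(u, w) = ∫_P ∇u · ∇w`,
together with `∫_P p = ∫_P v`. For a polynomial, `a(p, p) = 0` forces `∇p = 0` on the open set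
`P`, so `p` is constant by analyticity, and `∫_P p = 0` then forces `p = 0`. Hence the form
`a(p, q) + (∫_P p)(∫_P q)` is nondegenerate and the combined problem has a unique solution by
finite-dimensionality; testing against `q = 1`, whose gradient vanishes, splits it back into the
two conditions.
-/

open MeasureTheory Set
open scoped RealInnerProductSpace Gradient

section LinearAlgebra

variable {K V M : Type*} [Field K] [AddCommGroup V] [Module K V] [FiniteDimensional K V]
  [AddCommGroup M] [Module K M]

theorem LinearMap.existsUnique_apply_eq_and_apply_eq (a : V →ₗ[K] V →ₗ[K] K) (b f : V →ₗ[K] K)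
    (c : K) (e : V) (hae : ∀ p, a p e = 0) (hbe : b e ≠ 0) (hfe : f e = 0)
    (hnd : ∀ p, a p = 0 → b p = 0 → p = 0) :
    ∃! p, a p = f ∧ b p = c := by
  let G : V →ₗ[K] Module.Dual K V := a + b.smulRight b
  have hG : ∀ p (g : Module.Dual K V) (d : K), g e = 0 →
      (G p = g + d • b ↔ a p = g ∧ b p = d) := by
    intro p g d hge
    refine ⟨fun h => ?_, fun ⟨hag, hbd⟩ => by simp [G, hag, hbd]⟩
    have hbd : b p = d := by
      have he := LinearMap.congr_fun h e
      simp only [G, LinearMap.add_apply, LinearMap.smulRight_apply, LinearMap.smul_apply, hae,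
        hge, smul_eq_mul, zero_add] at he
      exact mul_right_cancel₀ hbe he
    refine ⟨add_right_cancel (b := b p • b) ?_, hbd⟩
    rw [← hbd] at h
    exact h
  have hinj : Function.Injective G := by
    rw [← LinearMap.ker_eq_bot, LinearMap.ker_eq_bot']
    intro p hp
    obtain ⟨ha, hb⟩ := (hG p 0 0 rfl).1 (by simpa using hp)
    exact hnd p ha hb
  have hsurj : Function.Surjective G :=
    (LinearMap.injective_iff_surjective_of_finrank_eq_finrank
      Subspace.dual_finrank_eq.symm).1 hinj
  obtain ⟨p, hp⟩ := hsurj (f + c • b)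
  exact ⟨p, (hG p f c hfe).1 hp, fun q hq => hinj (((hG q f c hfe).2 hq).trans hp.symm)⟩

theorem Submodule.existsUnique_mem_forall_apply_eq_and_apply_eq (W : Submodule K M)
    [FiniteDimensional K W] (a : M →ₗ[K] M →ₗ[K] K) (b f : M →ₗ[K] K) (c : K) {e : M}
    (heW : e ∈ W) (hae : ∀ p ∈ W, a p e = 0) (hbe : b e ≠ 0) (hfe : f e = 0)
    (hnd : ∀ p ∈ W, (∀ q ∈ W, a p q = 0) → b p = 0 → p = 0) :
    ∃! p, p ∈ W ∧ (∀ q ∈ W, a p q = f q) ∧ b p = c := by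
  obtain ⟨p, hp, huniq⟩ := LinearMap.existsUnique_apply_eq_and_apply_eq
    (a.compl₁₂ W.subtype W.subtype) (b ∘ₗ W.subtype) (f ∘ₗ W.subtype) c ⟨e, heW⟩
    (fun p => hae p p.2) hbe hfe
    (fun p ha hb => Subtype.ext (hnd p p.2 (fun q hq => LinearMap.congr_fun ha ⟨q, hq⟩) hb))
  refine ⟨p, ⟨p.2, fun q hq => LinearMap.congr_fun hp.1 ⟨q, hq⟩, hp.2⟩, ?_⟩
  rintro q ⟨hqW, hqa, hqb⟩
  exact congrArg Subtype.val (huniq ⟨q, hqW⟩ ⟨LinearMap.ext fun r => hqa r r.2, hqb⟩)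

end LinearAlgebra

section BoundedSets

variable {X E : Type*} [MetricSpace X] [ProperSpace X] [MeasurableSpace X] {μ : Measure X}
  [IsFiniteMeasureOnCompacts μ] {s : Set X}

theorem Continuous.integrableOn_of_isBounded [OpensMeasurableSpace X] [NormedAddCommGroup E]
    {f : X → E}
    (hf : Continuous f) (hs : Bornology.IsBounded s) : IntegrableOn f s μ :=
  (hf.continuousOn.integrableOn_compact hs.isCompact_closure).mono_set subset_closure

theorem IsOpen.measureReal_pos_of_isBounded [μ.IsOpenPosMeasure] (hso : IsOpen s)
    (hsne : s.Nonempty) (hs : Bornology.IsBounded s) : 0 < μ.real s :=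
  ENNReal.toReal_pos (hso.measure_pos μ hsne).ne' hs.measure_lt_top.ne

end BoundedSets

section Gradient

variable {F : Type*} [NormedAddCommGroup F] [InnerProductSpace ℝ F] [CompleteSpace F]

theorem gradient_add {f g : F → ℝ} {x : F} (hf : DifferentiableAt ℝ f x)
    (hg : DifferentiableAt ℝ g x) : ∇ (f + g) x = ∇ f x + ∇ g x := by
  simp only [gradient, fderiv_add hf hg, map_add]

theorem gradient_const_smul {f : F → ℝ} {x : F} (c : ℝ) (hf : DifferentiableAt ℝ f x) :
    ∇ (c • f) x = c • ∇ f x := by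
  simp only [gradient, fderiv_const_smul hf c, map_smul]

theorem ContDiff.continuous_gradient {f : F → ℝ} {n : WithTop ℕ∞} (hf : ContDiff ℝ n f)
    (hn : n ≠ 0) : Continuous (∇ f) :=
  (InnerProductSpace.toDual ℝ F).symm.continuous.comp (hf.continuous_fderiv hn)

theorem AnalyticOnNhd.eq_of_gradient_eqOn_zero {f : F → ℝ} (hf : AnalyticOnNhd ℝ f univ)
    {P : Set F} (hP : IsOpen P) {z : F} (hz : z ∈ P) (h : ∀ x ∈ P, ∇ f x = 0) (x : F) :
    f x = f z := by
  have hfderiv : fderiv ℝ f =ᶠ[nhds z] 0 := by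
    filter_upwards [hP.mem_nhds hz] with y hy
    simpa [gradient] using h y hy
  have hfderiv_zero : ∀ y, fderiv ℝ f y = 0 := fun y =>
    hf.fderiv.eqOn_zero_of_preconnected_of_eventuallyEq_zero isPreconnected_univ
      (mem_univ z) hfderiv (mem_univ y)
  exact is_const_of_fderiv_eq_zero (fun y => (hf y trivial).differentiableAt) hfderiv_zero x z

end Gradient

def contDiffSubmodule (F : Type*) [NormedAddCommGroup F] [NormedSpace ℝ F] (n : WithTop ℕ∞) :
    Submodule ℝ (F → ℝ) where
  carrier := {f | ContDiff ℝ n f}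
  add_mem' := ContDiff.add
  zero_mem' := contDiff_const
  smul_mem' c _ hf := hf.const_smul c

theorem contDiffSubmodule.contDiff_coe {F : Type*} [NormedAddCommGroup F] [NormedSpace ℝ F]
    {n : WithTop ℕ∞} (u : contDiffSubmodule F n) : ContDiff ℝ n (u : F → ℝ) :=
  u.2

open contDiffSubmodule

noncomputable section SetIntegral

variable {F : Type*} [NormedAddCommGroup F] [NormedSpace ℝ F] [ProperSpace F] [MeasurableSpace F]
  [BorelSpace F] (μ : Measure F) [IsFiniteMeasureOnCompacts μ] {P : Set F}
  {n : WithTop ℕ∞}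

def setIntegralₗ (hP : Bornology.IsBounded P) : contDiffSubmodule F n →ₗ[ℝ] ℝ where
  toFun u := ∫ x in P, (u : F → ℝ) x ∂μ
  map_add' u w := integral_add ((contDiff_coe u).continuous.integrableOn_of_isBounded hP)
    ((contDiff_coe w).continuous.integrableOn_of_isBounded hP)
  map_smul' c _ := integral_const_mul c _

theorem setIntegralₗ_apply (hP : Bornology.IsBounded P) (u : contDiffSubmodule F n) :
    setIntegralₗ μ hP u = ∫ x in P, (u : F → ℝ) x ∂μ :=
  rfl

end SetIntegral

noncomputable section DirichletForm

variable {F : Type*} [NormedAddCommGroup F] [InnerProductSpace ℝ F] [FiniteDimensional ℝ F]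
  [MeasurableSpace F] [BorelSpace F] (μ : Measure F) [IsFiniteMeasureOnCompacts μ] {P : Set F}

local notation "C¹" => contDiffSubmodule F 1

variable {μ} in
theorem integrableOn_inner_gradient (hP : Bornology.IsBounded P) (u w : C¹) :
    IntegrableOn (fun x => ⟪∇ (u : F → ℝ) x, ∇ (w : F → ℝ) x⟫) P μ :=
  (((contDiff_coe u).continuous_gradient one_ne_zero).inner
    ((contDiff_coe w).continuous_gradient one_ne_zero)).integrableOn_of_isBounded hP

def dirichletForm (hP : Bornology.IsBounded P) : C¹ →ₗ[ℝ] C¹ →ₗ[ℝ] ℝ :=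
  LinearMap.mk₂ ℝ (fun u w => ∫ x in P, ⟪∇ (u : F → ℝ) x, ∇ (w : F → ℝ) x⟫ ∂μ)
    (fun u₁ u₂ w => by
      simp only [Submodule.coe_add, gradient_add ((contDiff_coe u₁).differentiable one_ne_zero _)
        ((contDiff_coe u₂).differentiable one_ne_zero _), inner_add_left]
      exact integral_add (integrableOn_inner_gradient hP u₁ w)
        (integrableOn_inner_gradient hP u₂ w))
    (fun c u w => by
      simp only [Submodule.coe_smul,
        gradient_const_smul c ((contDiff_coe u).differentiable one_ne_zero _),
        real_inner_smul_left]
      exact integral_const_mul c _)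
    (fun u w₁ w₂ => by
      simp only [Submodule.coe_add, gradient_add ((contDiff_coe w₁).differentiable one_ne_zero _)
        ((contDiff_coe w₂).differentiable one_ne_zero _), inner_add_right]
      exact integral_add (integrableOn_inner_gradient hP u w₁)
        (integrableOn_inner_gradient hP u w₂))
    (fun c u w => by
      simp only [Submodule.coe_smul,
        gradient_const_smul c ((contDiff_coe w).differentiable one_ne_zero _),
        real_inner_smul_right]
      exact integral_const_mul c _)

theorem dirichletForm_apply (hP : Bornology.IsBounded P) (u w : C¹) :
    dirichletForm μ hP u w = ∫ x in P, ⟪∇ (u : F → ℝ) x, ∇ (w : F → ℝ) x⟫ ∂μ :=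
  rfl

theorem dirichletForm_eq_zero_of_gradient_eq_zero (hP : Bornology.IsBounded P) (u : C¹)
    {w : C¹} (hw : ∀ x, ∇ (w : F → ℝ) x = 0) : dirichletForm μ hP u w = 0 := by
  simp [dirichletForm_apply, hw]

theorem gradient_eqOn_zero_of_dirichletForm_self_eq_zero [μ.IsOpenPosMeasure] (hPo : IsOpen P)
    (hP : Bornology.IsBounded P) {u : C¹} (hu : dirichletForm μ hP u u = 0) (x : F)
    (hx : x ∈ P) : ∇ (u : F → ℝ) x = 0 := by
  have hae : (fun x => ⟪∇ (u : F → ℝ) x, ∇ (u : F → ℝ) x⟫) =ᵐ[μ.restrict P] 0 :=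
    (integral_eq_zero_iff_of_nonneg (fun _ => real_inner_self_nonneg)
      (integrableOn_inner_gradient hP u u)).1 hu
  have hcont := (contDiff_coe u).continuous_gradient one_ne_zero
  refine inner_self_eq_zero.1 (Measure.eqOn_of_ae_eq hae (hcont.inner hcont).continuousOn
    continuousOn_const ?_ hx)
  rw [hPo.interior_eq]
  exact subset_closure

end DirichletForm

namespace MvPolynomial

variable {σ : Type*} [Fintype σ]

theorem analyticOnNhd_eval_euclidean (p : MvPolynomial σ ℝ) :
    AnalyticOnNhd ℝ (fun y : EuclideanSpace ℝ σ => eval (fun i => y i) p) univ :=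
  AnalyticOnNhd.eval_continuousLinearMap
    (EuclideanSpace.equiv σ ℝ : EuclideanSpace ℝ σ →L[ℝ] σ → ℝ) p

noncomputable def toContDiffₗ (n : WithTop ℕ∞) :
    MvPolynomial σ ℝ →ₗ[ℝ] contDiffSubmodule (EuclideanSpace ℝ σ) n where
  toFun p := ⟨fun y => eval (fun i => y i) p, (analyticOnNhd_eval_euclidean p).contDiff⟩
  map_add' p q := by ext; simp
  map_smul' c p := by ext; simp

@[simp]
theorem coe_toContDiffₗ (n : WithTop ℕ∞) (p : MvPolynomial σ ℝ) :
    (toContDiffₗ n p : EuclideanSpace ℝ σ → ℝ) = fun y => eval (fun i => y i) p :=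
  rfl

theorem toContDiffₗ_injective (n : WithTop ℕ∞) :
    Function.Injective (toContDiffₗ (σ := σ) n) := by
  rw [← LinearMap.ker_eq_bot, LinearMap.ker_eq_bot']
  intro p hp
  refine MvPolynomial.funext fun x => ?_
  simpa using congrFun (congrArg Subtype.val hp) (WithLp.toLp 2 x)

theorem eq_zero_of_dirichletForm_self_eq_zero_of_setIntegralₗ_eq_zero
    {μ : Measure (EuclideanSpace ℝ σ)} [IsFiniteMeasureOnCompacts μ] [μ.IsOpenPosMeasure]
    {P : Set (EuclideanSpace ℝ σ)} (hPo : IsOpen P) (hPne : P.Nonempty)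
    (hP : Bornology.IsBounded P) {p : MvPolynomial σ ℝ}
    (hD : dirichletForm μ hP (toContDiffₗ 1 p) (toContDiffₗ 1 p) = 0)
    (hI : setIntegralₗ μ hP (toContDiffₗ 1 p) = 0) : p = 0 := by
  obtain ⟨z, hz⟩ := hPne
  have hconst : ∀ x : EuclideanSpace ℝ σ, eval (fun i => x i) p = eval (fun i => z i) p :=
    (analyticOnNhd_eval_euclidean p).eq_of_gradient_eqOn_zero hPo hz
      (gradient_eqOn_zero_of_dirichletForm_self_eq_zero μ hPo hP hD)
  have hz0 : eval (fun i => z i) p = 0 := by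
    have hI' : setIntegralₗ μ hP (toContDiffₗ 1 p) = μ.real P * eval (fun i => z i) p := by
      simp [setIntegralₗ_apply, hconst]
    rw [hI] at hI'
    exact (mul_eq_zero.1 hI'.symm).resolve_left (hPo.measureReal_pos_of_isBounded ⟨z, hz⟩ hP).ne'
  apply toContDiffₗ_injective 1
  ext x
  simpa [hz0] using hconst x

end MvPolynomial

theorem elliptic_projection_exists_unique_general
    (k : ℕ)
    (P : Set (EuclideanSpace ℝ (Fin 3)))
    (hPopen : IsOpen P) (hPne : P.Nonempty) (hPbdd : Bornology.IsBounded P)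
    (v : EuclideanSpace ℝ (Fin 3) → ℝ) (hv : ContDiff ℝ 1 v) :
    ∃! p : MvPolynomial (Fin 3) ℝ, p.totalDegree ≤ k ∧
      (∀ q : MvPolynomial (Fin 3) ℝ, q.totalDegree ≤ k →
        ∫ x in P,
          ⟪gradient (fun y : EuclideanSpace ℝ (Fin 3) =>
              v y - MvPolynomial.eval (fun i => y i) p) x,
            gradient (fun y : EuclideanSpace ℝ (Fin 3) =>
              MvPolynomial.eval (fun i => y i) q) x⟫ = 0) ∧
      ∫ x in P, (v x - MvPolynomial.eval (fun i => x i) p) = 0 := by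
  set φ := MvPolynomial.toContDiffₗ (σ := Fin 3) 1
  set D := dirichletForm volume hPbdd
  set I := setIntegralₗ volume hPbdd
  set V : contDiffSubmodule (EuclideanSpace ℝ (Fin 3)) 1 := ⟨v, hv⟩
  have hφ1 : ∀ x, ∇ (φ 1 : EuclideanSpace ℝ (Fin 3) → ℝ) x = 0 := by simp [φ]
  have hI1 : I (φ 1) ≠ 0 := by
    simpa [I, φ, setIntegralₗ_apply] using (hPopen.measureReal_pos_of_isBounded hPne hPbdd).ne'
  have key :=
    (MvPolynomial.restrictTotalDegree (Fin 3) ℝ k).existsUnique_mem_forall_apply_eq_and_apply_eq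
    (D.compl₁₂ φ φ) (I ∘ₗ φ) (D V ∘ₗ φ) (I V)
    ((MvPolynomial.mem_restrictTotalDegree _ _ _).2 (by simp))
    (fun p _ => dirichletForm_eq_zero_of_gradient_eq_zero volume hPbdd _ hφ1) hI1
    (dirichletForm_eq_zero_of_gradient_eq_zero volume hPbdd _ hφ1)
    (fun p hp ha hb => MvPolynomial.eq_zero_of_dirichletForm_self_eq_zero_of_setIntegralₗ_eq_zero
      hPopen hPne hPbdd (ha p hp) hb)
  refine (existsUnique_congr fun p => ?_).1 key
  change _ ↔ p.totalDegree ≤ k ∧ (∀ q : MvPolynomial (Fin 3) ℝ, q.totalDegree ≤ k →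
    D (V - φ p) (φ q) = 0) ∧ I (V - φ p) = 0
  simp only [MvPolynomial.mem_restrictTotalDegree, LinearMap.compl₁₂_apply, LinearMap.comp_apply,
    map_sub, LinearMap.sub_apply, sub_eq_zero, eq_comm (a := D V _), eq_comm (a := I V)]

/-- Let `k ≥ 2`, let `P ⊆ ℝ³` be a nonempty bounded open set, and let
`v : ℝ³ → ℝ` be continuously differentiable.  Then there is a unique polynomial function
`p` of total degree at most `k` such that `∫_P ∇(v − p)·∇q = 0` for every polynomial `q` of
total degree at most `k`, and `∫_P (v − p) = 0`.  (This is the well-posedness of the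
elliptic projection `Π^∇_P` of the Virtual Element Method.) -/
theorem elliptic_projection_exists_unique
    (k : ℕ) (hk : 2 ≤ k)
    (P : Set (EuclideanSpace ℝ (Fin 3)))
    (hPopen : IsOpen P) (hPne : P.Nonempty) (hPbdd : Bornology.IsBounded P)
    (v : EuclideanSpace ℝ (Fin 3) → ℝ) (hv : ContDiff ℝ 1 v) :
    ∃! p : MvPolynomial (Fin 3) ℝ, p.totalDegree ≤ k ∧
      (∀ q : MvPolynomial (Fin 3) ℝ, q.totalDegree ≤ k →
        ∫ x in P,
          ⟪gradient (fun y : EuclideanSpace ℝ (Fin 3) =>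
              v y - MvPolynomial.eval (fun i => y i) p) x,
            gradient (fun y : EuclideanSpace ℝ (Fin 3) =>
              MvPolynomial.eval (fun i => y i) q) x⟫ = 0) ∧
      ∫ x in P, (v x - MvPolynomial.eval (fun i => x i) p) = 0 :=
  elliptic_projection_exists_unique_general k P hPopen hPne hPbdd v hv
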